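/- arXiv:math/0402328 — 2 statements merged into one kernel-verified Lean document; each statement's English description precedes it below -/
import Mathlib

section
/- Let n ≥ 1 and let P ⊆ ℝ^n be a full-dimensional lattice polytope. Suppose k ≥ 0 is an integer such that kP contains no lattice point in its interior, and let ℓ be an integer with ℓ ≥ max{n − k, 1}. Then for every integer m ≥ 1, every lattice point of (m+1)ℓP is the sum of a lattice point of mℓP and a lattice point of ℓP; equivalently, ((m+1)ℓP) ∩ ℤ^n = (mℓP ∩ ℤ^n) + (ℓP ∩ ℤ^n). -/
/-!
Write a lattice point `z` of `(a + ℓ)P` as `z = ∑ μᵢ vᵢ`, `μ ≥ 0`, `∑ μᵢ = a + ℓ`, over an affine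
basis `v₀, …, vₙ` of lattice points of `P` (Carathéodory). If `∑ ⌊μᵢ⌋ ≥ a`, pick integers
`cᵢ ≤ ⌊μᵢ⌋` with `∑ cᵢ = a`: then `∑ cᵢ vᵢ ∈ aP` and `z - ∑ cᵢ vᵢ ∈ ℓP` are lattice points.
Otherwise, as `n + 1 ≤ ℓ + k + 1`, there are integers `nᵢ > μᵢ` with `∑ nᵢ = a + ℓ + k`, and
`∑ nᵢ vᵢ - z` is a lattice point with positive barycentric weights `nᵢ - μᵢ` of total `k`,
i.e. an interior lattice point of `kP`.
-/

open Pointwise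

def latticePts (n : ℕ) : Set (Fin n → ℝ) := {x | ∀ i, ∃ z : ℤ, x i = (z : ℝ)}

namespace Finset

theorem exists_le_sum_eq_of_le {ι : Type*} [DecidableEq ι] (s : Finset ι) {f : ι → ℕ} {d : ℕ}
    (hd : d ≤ ∑ i ∈ s, f i) : ∃ g ≤ f, ∑ i ∈ s, g i = d := by
  induction s using Finset.induction_on generalizing d with
  | empty => exact ⟨0, fun _ => Nat.zero_le _, by simp_all⟩
  | @insert j s hj ih =>
    rw [sum_insert hj] at hd
    obtain ⟨g, hgf, hg⟩ := ih (d := d - min d (f j)) (by omega)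
    refine ⟨Function.update g j (min d (f j)), ?_, ?_⟩
    · intro i
      rcases eq_or_ne i j with rfl | hij
      · simp
      · simpa [hij] using hgf i
    · rw [sum_insert hj, Function.update_self, sum_update_of_notMem hj, hg]
      omega

theorem exists_ge_sum_eq_of_le {ι : Type*} [DecidableEq ι] {s : Finset ι} {j : ι} (hj : j ∈ s)
    {f : ι → ℕ} {d : ℕ} (hd : ∑ i ∈ s, f i ≤ d) : ∃ g ≥ f, ∑ i ∈ s, g i = d :=
  ⟨f + Pi.single j (d - ∑ i ∈ s, f i), le_add_of_nonneg_right fun _ => Nat.zero_le _, by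
    simp only [Pi.add_apply]
    rw [sum_add_distrib, sum_pi_single' j, if_pos hj]; omega⟩

end Finset

theorem Convex.sum_smul_mem_sum_smul {ι E : Type*} [AddCommGroup E] [Module ℝ E] {C : Set E}
    (hC : Convex ℝ C) {t : Finset ι} {w : ι → ℝ} {p : ι → E} (hw : ∀ i ∈ t, 0 ≤ w i)
    (hw₀ : 0 < ∑ i ∈ t, w i) (hp : ∀ i ∈ t, p i ∈ C) :
    ∑ i ∈ t, w i • p i ∈ (∑ i ∈ t, w i) • C := by
  rw [← smul_inv_smul₀ hw₀.ne' (∑ i ∈ t, w i • p i)]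
  exact Set.smul_mem_smul_set (hC.centerMass_mem hw hw₀ hp)

theorem AffineIndependent.exists_subset_affineIndependent_affineSpan_eq_top {k V P : Type*}
    [DivisionRing k] [AddCommGroup V] [Module k V] [AddTorsor V P] {t s : Set P}
    (h : AffineIndependent k ((↑) : t → P)) (hts : t ⊆ s) (ht : t.Nonempty)
    (hs : affineSpan k s = ⊤) :
    ∃ u, t ⊆ u ∧ u ⊆ s ∧ AffineIndependent k ((↑) : u → P) ∧ affineSpan k u = ⊤ := by
  obtain ⟨p, hp⟩ := ht
  rw [affineIndependent_set_iff_linearIndependent_vsub k hp] at h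
  obtain ⟨b, hbs, htb, hsb, hb⟩ :=
    exists_linearIndepOn_id_extension h (Set.image_mono (Set.sdiff_subset_sdiff_left hts))
  have hb₀ : ∀ v ∈ b, v ≠ 0 := by
    intro v hv
    obtain ⟨x, ⟨-, hxp⟩, rfl⟩ := hbs hv
    exact vsub_ne_zero.mpr hxp
  refine ⟨{p} ∪ (· +ᵥ p) '' b, ?_, ?_,
    (linearIndependent_set_iff_affineIndependent_vadd_union_singleton k hb₀ p).mp hb, ?_⟩
  · intro x hx
    rcases eq_or_ne x p with rfl | hxp
    · exact Or.inl rfl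
    · exact Or.inr ⟨x -ᵥ p, htb ⟨x, ⟨hx, hxp⟩, rfl⟩, vsub_vadd x p⟩
  · rintro _ (rfl | ⟨_, hv, rfl⟩)
    · exact hts hp
    · obtain ⟨x, ⟨hx, -⟩, rfl⟩ := hbs hv
      simpa using hx
  · refine affineSpan_singleton_union_vadd_eq_top_of_span_eq_top p (eq_top_iff.mpr ?_)
    rw [Subtype.range_coe, ← AffineSubspace.direction_top k V P, ← hs, direction_affineSpan,
      vectorSpan_eq_span_vsub_set_right_ne k (hts hp)]
    exact Submodule.span_le.mpr hsb

theorem exists_affineIndependent_affineSpan_eq_top_of_mem_convexHull {E : Type*} [AddCommGroup E]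
    [Module ℝ E] {s : Set E} (hs : affineSpan ℝ s = ⊤) {q : E} (hq : q ∈ convexHull ℝ s) :
    ∃ u ⊆ s, AffineIndependent ℝ ((↑) : u → E) ∧ affineSpan ℝ u = ⊤ ∧ q ∈ convexHull ℝ u := by
  rw [convexHull_eq_union] at hq
  simp only [Set.mem_iUnion] at hq
  obtain ⟨t, hts, ht, hqt⟩ := hq
  obtain ⟨u, htu, hus, hu, hu_span⟩ := ht.exists_subset_affineIndependent_affineSpan_eq_top hts
    (convexHull_nonempty_iff.mp ⟨q, hqt⟩) hs
  exact ⟨u, hus, hu, hu_span, convexHull_mono htu hqt⟩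

namespace AffineBasis

variable {ι E : Type*} [Fintype ι] [NormedAddCommGroup E] [NormedSpace ℝ E]
  (b : AffineBasis ι ℝ E)

theorem sum_smul_mem_interior_smul_convexHull {w : ι → ℝ} (hw : ∀ i, 0 < w i) :
    ∑ i, w i • b i ∈ interior ((∑ i, w i) • convexHull ℝ (Set.range b)) := by
  have hw₀ : 0 < ∑ i, w i :=
    Finset.sum_pos (fun i _ => hw i) (Finset.univ_nonempty_iff.mpr b.nonempty)
  have hw₁ : ∑ i, w i / ∑ j, w j = 1 := by rw [← Finset.sum_div, div_self hw₀.ne']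
  rw [interior_smul₀ hw₀.ne', b.interior_convexHull]
  refine ⟨∑ i, (w i / ∑ j, w j) • b i, fun i => ?_, ?_⟩
  · rw [← Finset.univ.affineCombination_eq_linear_combination _ _ hw₁,
      b.coord_apply_combination_of_mem (Finset.mem_univ i) hw₁]
    exact div_pos (hw i) hw₀
  · simp only [Finset.smul_sum, smul_smul, mul_div_cancel₀ _ hw₀.ne']

variable {L : AddSubgroup E} (hb : ∀ i, b i ∈ L) {μ : ι → ℝ} (hz : ∑ i, μ i • b i ∈ L)
include hb hz

theorem exists_mem_interior_smul_convexHull_of_sum_floor_add_card_le {d k : ℕ}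
    (hμ : ∑ i, μ i = d) (hd : ∑ i, ⌊μ i⌋₊ + Fintype.card ι ≤ d + k) :
    ∃ x ∈ interior ((k : ℝ) • convexHull ℝ (Set.range b)), x ∈ L := by
  classical
  obtain ⟨n, hn, hn_sum⟩ := Finset.exists_ge_sum_eq_of_le (Finset.mem_univ b.nonempty.some)
    (f := fun i => ⌊μ i⌋₊ + 1) (d := d + k) (by simpa [Finset.sum_add_distrib] using hd)
  have hμn : ∀ i, 0 < (n i : ℝ) - μ i := fun i =>
    sub_pos.mpr ((Nat.lt_floor_add_one (μ i)).trans_le (by exact_mod_cast hn i))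
  have hk : ∑ i, ((n i : ℝ) - μ i) = k := by
    rw [Finset.sum_sub_distrib, hμ, ← Nat.cast_sum, hn_sum]; push_cast; ring
  refine ⟨∑ i, ((n i : ℝ) - μ i) • b i, hk ▸ b.sum_smul_mem_interior_smul_convexHull hμn, ?_⟩
  simp only [sub_smul, Finset.sum_sub_distrib, Nat.cast_smul_eq_nsmul]
  exact L.sub_mem (L.sum_mem fun i _ => L.nsmul_mem (hb i) _) hz

theorem sum_smul_mem_smul_convexHull_inter_add {a ℓ k : ℕ} (ha : 0 < a) (hℓ : 0 < ℓ)
    (hμ₀ : ∀ i, 0 ≤ μ i) (hμ : ∑ i, μ i = a + ℓ) (hcard : Fintype.card ι ≤ ℓ + k + 1)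
    (hk : ∀ x ∈ interior ((k : ℝ) • convexHull ℝ (Set.range b)), x ∉ L) :
    ∑ i, μ i • b i ∈ ((a : ℝ) • convexHull ℝ (Set.range b) ∩ L) +
      ((ℓ : ℝ) • convexHull ℝ (Set.range b) ∩ L) := by
  classical
  have hfloor : a ≤ ∑ i, ⌊μ i⌋₊ := by
    by_contra! h
    obtain ⟨x, hx, hxL⟩ := b.exists_mem_interior_smul_convexHull_of_sum_floor_add_card_le hb hz
      (d := a + ℓ) (k := k) (by exact_mod_cast hμ) (by omega)
    exact hk x hx hxL
  obtain ⟨c, hc, hc_sum⟩ := Finset.univ.exists_le_sum_eq_of_le hfloor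
  have hcμ : ∀ i, (c i : ℝ) ≤ μ i :=
    fun i => (Nat.cast_le.mpr (hc i)).trans (Nat.floor_le (hμ₀ i))
  have hc_sum' : ∑ i, (c i : ℝ) = a := by exact_mod_cast hc_sum
  have hconv := convex_convexHull ℝ (Set.range b)
  have hmem : ∀ i ∈ Finset.univ, b i ∈ convexHull ℝ (Set.range b) :=
    fun i _ => subset_convexHull ℝ _ (Set.mem_range_self i)
  have hxL : ∑ i, (c i : ℝ) • b i ∈ L := by
    simp only [Nat.cast_smul_eq_nsmul]
    exact L.sum_mem fun i _ => L.nsmul_mem (hb i) _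
  refine ⟨_, ⟨hc_sum' ▸ hconv.sum_smul_mem_sum_smul (fun i _ => Nat.cast_nonneg _)
    (hc_sum' ▸ Nat.cast_pos.mpr ha) hmem, hxL⟩, ∑ i, (μ i - c i) • b i, ⟨?_, ?_⟩, ?_⟩
  · have hsum : ∑ i, (μ i - c i) = ℓ := by rw [Finset.sum_sub_distrib, hμ, hc_sum']; ring
    exact hsum ▸ hconv.sum_smul_mem_sum_smul (fun i _ => sub_nonneg.mpr (hcμ i))
      (hsum ▸ Nat.cast_pos.mpr hℓ) hmem
  · simpa only [sub_smul, Finset.sum_sub_distrib, SetLike.mem_coe] using L.sub_mem hz hxL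
  · simp only [sub_smul, Finset.sum_sub_distrib, add_sub_cancel]

end AffineBasis

theorem smul_convexHull_inter_add_subset {E : Type*} [AddCommGroup E] [Module ℝ E]
    (L : AddSubgroup E) {C : Set E} (hC : Convex ℝ C) (a ℓ : ℕ) :
    ((a : ℝ) • C ∩ L) + ((ℓ : ℝ) • C ∩ L) ⊆ (((a + ℓ : ℕ) : ℝ) • C) ∩ L := by
  rintro _ ⟨x, ⟨hx, hxL⟩, y, ⟨hy, hyL⟩, rfl⟩
  rw [Nat.cast_add, hC.add_smul (Nat.cast_nonneg a) (Nat.cast_nonneg ℓ)]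
  exact ⟨Set.add_mem_add hx hy, L.add_mem hxL hyL⟩

theorem smul_convexHull_inter_eq_add {E : Type*} [NormedAddCommGroup E] [NormedSpace ℝ E]
    [FiniteDimensional ℝ E] (L : AddSubgroup E) {s : Set E} (hsL : s ⊆ L)
    (hs : affineSpan ℝ s = ⊤) {a ℓ k : ℕ} (ha : 0 < a) (hℓ : 0 < ℓ)
    (hdim : Module.finrank ℝ E ≤ ℓ + k)
    (hk : ∀ x ∈ interior ((k : ℝ) • convexHull ℝ s), x ∉ L) :
    (((a + ℓ : ℕ) : ℝ) • convexHull ℝ s) ∩ L =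
      ((a : ℝ) • convexHull ℝ s ∩ L) + ((ℓ : ℝ) • convexHull ℝ s ∩ L) := by
  refine subset_antisymm ?_ (smul_convexHull_inter_add_subset L (convex_convexHull ℝ s) a ℓ)
  rintro _ ⟨⟨q, hq, rfl⟩, hzL⟩
  obtain ⟨u, hus, hu, hu_span, hqu⟩ :=
    exists_affineIndependent_affineSpan_eq_top_of_mem_convexHull hs hq
  let b : AffineBasis u ℝ E := ⟨(↑), hu, by rwa [Subtype.range_coe]⟩
  have hb : Set.range b = u := Subtype.range_coe
  have : Finite u := b.finite
  have : Fintype u := .ofFinite u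
  have hhull : convexHull ℝ (Set.range b) ⊆ convexHull ℝ s := by
    rw [hb]
    exact convexHull_mono hus
  have hq_coord : ∀ i, 0 ≤ b.coord i q := by
    rwa [← hb, b.convexHull_eq_nonneg_coord] at hqu
  set μ : u → ℝ := fun i => (a + ℓ : ℕ) * b.coord i q
  have hz : ((a + ℓ : ℕ) : ℝ) • q = ∑ i, μ i • b i := by
    simp only [μ, mul_smul, ← Finset.smul_sum, b.linear_combination_coord_eq_self]
  have hμ : ∑ i, μ i = a + ℓ := by
    simp only [μ, ← Finset.mul_sum, b.sum_coord_apply_eq_one, mul_one, Nat.cast_add]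
  have hcard : Fintype.card u ≤ ℓ + k + 1 := by
    rw [b.card_eq_finrank_add_one]; omega
  change ((a + ℓ : ℕ) : ℝ) • q ∈ _
  rw [hz]
  refine Set.add_subset_add (Set.inter_subset_inter_left _ (Set.smul_set_mono hhull))
    (Set.inter_subset_inter_left _ (Set.smul_set_mono hhull)) ?_
  exact b.sum_smul_mem_smul_convexHull_inter_add (fun i => hsL (hus i.2)) (hz ▸ hzL) ha hℓ
    (fun i => mul_nonneg (Nat.cast_nonneg _) (hq_coord i)) hμ hcard
    fun x hx => hk x (interior_mono (Set.smul_set_mono hhull) hx)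

def latticeAddSubgroup (n : ℕ) : AddSubgroup (Fin n → ℝ) where
  carrier := latticePts n
  zero_mem' i := ⟨0, by simp⟩
  add_mem' hx hy i := by
    obtain ⟨a, ha⟩ := hx i
    obtain ⟨b, hb⟩ := hy i
    exact ⟨a + b, by simp [ha, hb]⟩
  neg_mem' hx i := by
    obtain ⟨a, ha⟩ := hx i
    exact ⟨-a, by simp [ha]⟩

theorem lattice_points_decompose_general
    (n : ℕ)
    (S : Finset (Fin n → ℝ))
    (hSlat : (S : Set (Fin n → ℝ)) ⊆ latticePts n)
    (P : Set (Fin n → ℝ)) (hP : P = convexHull ℝ (S : Set (Fin n → ℝ)))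
    (hPfull : (interior P).Nonempty)
    (k : ℕ)
    (hk : ∀ x ∈ interior ((k : ℝ) • P), x ∉ latticePts n)
    (ℓ : ℕ) (hℓ : max (n - k) 1 ≤ ℓ) :
    ∀ m : ℕ, 1 ≤ m →
      ((((m + 1) * ℓ : ℕ) : ℝ) • P) ∩ latticePts n
        = ((((m * ℓ : ℕ) : ℝ) • P) ∩ latticePts n) + (((ℓ : ℝ) • P) ∩ latticePts n) := by
  intro m hm
  subst hP
  have hspan : affineSpan ℝ (S : Set (Fin n → ℝ)) = ⊤ := by
    rw [← affineSpan_convexHull]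
    exact (convex_convexHull ℝ _).interior_nonempty_iff_affineSpan_eq_top.mp hPfull
  rw [add_one_mul]
  exact smul_convexHull_inter_eq_add (latticeAddSubgroup n) hSlat hspan
    (Nat.mul_pos hm (by omega)) (by omega) (by rw [Module.finrank_fin_fun]; omega) hk

/-- Let `P ⊆ ℝ^n` (`n ≥ 1`) be a full-dimensional lattice polytope, `k ≥ 0` an integer such
that `kP` contains no lattice point in its interior, and `ℓ ≥ max {n - k, 1}`. Then for every
`m ≥ 1`, `((m+1)ℓP) ∩ ℤ^n = (mℓP ∩ ℤ^n) + (ℓP ∩ ℤ^n)` (Minkowski sum). -/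
theorem lattice_points_decompose
    (n : ℕ) (hn : 1 ≤ n)
    (S : Finset (Fin n → ℝ)) (hS : S.Nonempty)
    (hSlat : (S : Set (Fin n → ℝ)) ⊆ latticePts n)
    (P : Set (Fin n → ℝ)) (hP : P = convexHull ℝ (S : Set (Fin n → ℝ)))
    (hPfull : (interior P).Nonempty)
    (k : ℕ)
    (hk : ∀ x ∈ interior ((k : ℝ) • P), x ∉ latticePts n)
    (ℓ : ℕ) (hℓ : max (n - k) 1 ≤ ℓ) :
    ∀ m : ℕ, 1 ≤ m →
      ((((m + 1) * ℓ : ℕ) : ℝ) • P) ∩ latticePts n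
        = ((((m * ℓ : ℕ) : ℝ) • P) ∩ latticePts n) + (((ℓ : ℝ) • P) ∩ latticePts n) :=
  lattice_points_decompose_general n S hSlat P hP hPfull k hk ℓ hℓ
end

section
/- Let n ≥ 2 and let P ⊆ ℝ^n be a full-dimensional lattice polytope such that the dilate (n−1)P contains no lattice point in its interior. Then P itself is normal: for every integer m ≥ 1, every lattice point of mP is a sum of m lattice points of P. (Special case k = n − 1, ℓ = 1 of the paper's Corollary 1.4.) -/
open Pointwise

/-!
By Carathéodory, a lattice point `x ∈ mP` is `∑ λ_v v` over affinely independent vertices `v`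
of `P` with `∑ λ_v = m`. The integer parts `⌊λ_v⌋` contribute lattice points of `P`; the
remainder `r = ∑ {λ_v} v` is a lattice point whose weight `h = ∑ {λ_v}` is an integer, and
`x` is a sum of `m` lattice points of `P` as soon as `h ≤ 1`. If `h ≥ 2`, the complementary
weights `1 - {λ_v}` on the support `I` of the fractional parts sum to `#I - h ≤ #I - 2`.
Extending `I` to an affine basis `J ⊆ S`, giving weight `1` to `J \ I` and the integral
surplus to a vertex of `I`, yields a lattice point with positive barycentric coordinates and
total weight `n - 1`, i.e. an interior lattice point of `(n - 1)P`.
-/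

open Finset

def latticeSubgroup (n : ℕ) : AddSubgroup (Fin n → ℝ) where
  carrier := latticePts n
  zero_mem' _ := ⟨0, by simp⟩
  add_mem' hx hy i := by
    obtain ⟨a, ha⟩ := hx i
    obtain ⟨b, hb⟩ := hy i
    exact ⟨a + b, by simp [ha, hb]⟩
  neg_mem' hx i := by
    obtain ⟨a, ha⟩ := hx i
    exact ⟨-a, by simp [ha]⟩

@[simp]
theorem mem_latticeSubgroup {n : ℕ} {x : Fin n → ℝ} : x ∈ latticeSubgroup n ↔ x ∈ latticePts n :=
  Iff.rfl

section AffineExtension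

variable {k V P : Type*} [DivisionRing k] [AddCommGroup V] [Module k V] [AddTorsor V P]

theorem exists_affineIndependent_extension {s t : Set P} (hs : AffineIndependent k ((↑) : s → P))
    (hst : s ⊆ t) :
    ∃ u, s ⊆ u ∧ u ⊆ t ∧ AffineIndependent k ((↑) : u → P) ∧ affineSpan k u = affineSpan k t := by
  rcases s.eq_empty_or_nonempty with rfl | ⟨p, hp⟩
  · obtain ⟨u, hut, hspan, hu⟩ := exists_affineIndependent k V t
    exact ⟨u, Set.empty_subset u, hut, hu, hspan⟩
  rw [affineIndependent_set_iff_linearIndependent_vsub k hp] at hs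
  obtain ⟨b, hbt, hsb, htb, hb⟩ := exists_linearIndepOn_id_extension (K := k) hs
    (Set.image_mono (Set.sdiff_subset_sdiff_left hst) :
      (· -ᵥ p) '' (s \ {p}) ⊆ (· -ᵥ p) '' (t \ {p}))
  have hb0 : ∀ v ∈ b, v ≠ (0 : V) := fun v hv => hb.ne_zero hv
  set u : Set P := {p} ∪ (· +ᵥ p) '' b
  have hpu : p ∈ u := Or.inl rfl
  have hut : u ⊆ t := by
    rintro x (rfl | ⟨v, hv, rfl⟩)
    · exact hst hp
    · obtain ⟨q, hq, rfl⟩ := hbt hv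
      simpa using hq.1
  refine ⟨u, fun x hx => ?_, hut,
    (linearIndependent_set_iff_affineIndependent_vadd_union_singleton k hb0 p).1 hb,
    le_antisymm (affineSpan_mono k hut) (affineSpan_le.2 fun q hq => ?_)⟩
  · by_cases hxp : x = p
    · exact hxp ▸ hpu
    · exact Or.inr ⟨x -ᵥ p, hsb ⟨x, ⟨hx, hxp⟩, rfl⟩, vsub_vadd x p⟩
  · by_cases hqp : q = p
    · exact hqp ▸ mem_affineSpan k hpu
    have hspan : Submodule.span k b ≤ vectorSpan k u := Submodule.span_le.2 fun v hv =>
      vadd_vsub v p ▸ vsub_mem_vectorSpan k (Or.inr ⟨v, hv, rfl⟩) hpu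
    rw [← vsub_vadd q p]
    refine AffineSubspace.vadd_mem_of_mem_direction ?_ (mem_affineSpan k hpu)
    rw [direction_affineSpan]
    exact hspan (htb ⟨q, ⟨hq, hqp⟩, rfl⟩)

end AffineExtension

theorem Finset.sum_smul_mem_interior_smul_convexHull {E : Type*} [NormedAddCommGroup E]
    [NormedSpace ℝ E] {J : Finset E} (hJ : AffineIndependent ℝ ((↑) : J → E))
    (hJspan : affineSpan ℝ (J : Set E) = ⊤) {c : E → ℝ} (hc : ∀ v ∈ J, 0 < c v) :
    ∑ v ∈ J, c v • v ∈ interior ((∑ v ∈ J, c v) • convexHull ℝ (J : Set E)) := by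
  have hJne : J.Nonempty := by
    by_contra! h
    simp [h] at hJspan
  set s := ∑ v ∈ J, c v
  have hs : 0 < s := sum_pos hc hJne
  let b : AffineBasis J ℝ E := ⟨(↑), hJ, by rwa [Subtype.range_coe]⟩
  set ω : J → ℝ := fun v => c v / s
  have hω : ∑ v, ω v = 1 := by
    rw [sum_coe_sort J (fun v => c v / s), ← sum_div, div_self hs.ne']
  have hcomb : univ.affineCombination ℝ b ω = s⁻¹ • ∑ v ∈ J, c v • v := by
    rw [affineCombination_eq_linear_combination _ _ _ hω, smul_sum,
      ← sum_coe_sort J]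
    refine sum_congr rfl fun v _ => ?_
    rw [smul_smul, inv_mul_eq_div]
    rfl
  rw [interior_smul₀ hs.ne', ← smul_inv_smul₀ hs.ne' (∑ v ∈ J, c v • v),
    Set.smul_mem_smul_set_iff₀ hs.ne', ← hcomb]
  have hb : Set.range b = J := Subtype.range_coe
  rw [← hb, b.interior_convexHull]
  intro v
  rw [b.coord_apply_combination_of_mem (mem_univ v) hω]
  exact div_pos (hc v v.2) hs

theorem Finset.sum_ite_mem_of_subset {ι M : Type*} [DecidableEq ι] [AddCommMonoid M]
    {I J : Finset ι} (hIJ : I ⊆ J) (f g : ι → M) :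
    ∑ v ∈ J, (if v ∈ I then f v else g v) = ∑ v ∈ I, f v + ∑ v ∈ J \ I, g v := by
  rw [sum_ite, filter_mem_eq_inter, inter_eq_right.2 hIJ, filter_notMem_eq_sdiff]

variable {n : ℕ} {S : Finset (Fin n → ℝ)}

theorem sum_smul_notMem_latticePts_of_pos
    (hk : ∀ x ∈ interior (((n - 1 : ℕ) : ℝ) • convexHull ℝ (S : Set (Fin n → ℝ))),
      x ∉ latticePts n)
    {J : Finset (Fin n → ℝ)} (hJS : J ⊆ S) (hJ : AffineIndependent ℝ ((↑) : J → Fin n → ℝ))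
    (hJspan : affineSpan ℝ (J : Set (Fin n → ℝ)) = ⊤) {c : (Fin n → ℝ) → ℝ}
    (hc : ∀ v ∈ J, 0 < c v) (hsum : ∑ v ∈ J, c v = #J - 2) :
    ∑ v ∈ J, c v • v ∉ latticePts n := by
  have hJcard : #J = n + 1 := by
    simpa using hJ.affineSpan_eq_top_iff_card_eq_finrank_add_one.1 (by rwa [Subtype.range_coe])
  have hpos : 0 < ∑ v ∈ J, c v := sum_pos hc (card_pos.1 (by omega))
  have hn : ∑ v ∈ J, c v = ((n - 1 : ℕ) : ℝ) := by
    rw [hsum, hJcard] at hpos ⊢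
    push_cast at hpos
    rw [Nat.cast_sub (by exact_mod_cast (by linarith : (1 : ℝ) ≤ n))]
    push_cast
    ring
  refine hk _ ?_
  rw [← hn]
  exact interior_mono (Set.smul_set_mono (convexHull_mono hJS))
    (sum_smul_mem_interior_smul_convexHull hJ hJspan hc)

theorem card_sub_one_le_of_sum_smul_mem_latticePts
    (hSlat : (S : Set (Fin n → ℝ)) ⊆ latticePts n) (hspan : affineSpan ℝ (S : Set (Fin n → ℝ)) = ⊤)
    (hk : ∀ x ∈ interior (((n - 1 : ℕ) : ℝ) • convexHull ℝ (S : Set (Fin n → ℝ))),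
      x ∉ latticePts n)
    {I : Finset (Fin n → ℝ)} (hIS : I ⊆ S) (hI : AffineIndependent ℝ ((↑) : I → Fin n → ℝ))
    {μ : (Fin n → ℝ) → ℝ} (hμ : ∀ v ∈ I, 0 < μ v) (hlat : ∑ v ∈ I, μ v • v ∈ latticePts n)
    {z : ℤ} (hz : ∑ v ∈ I, μ v = z) :
    (#I : ℤ) - 1 ≤ z := by
  classical
  rcases I.eq_empty_or_nonempty with rfl | ⟨v₀, hv₀⟩
  · have : z = 0 := by simpa [eq_comm] using hz
    simp [this]
  by_contra! hlt
  obtain ⟨J, hIJ, hJS, hJ, hJspan⟩ := exists_affineIndependent_extension hI (coe_subset.2 hIS)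
  rw [hspan] at hJspan
  lift J to Finset (Fin n → ℝ) using S.finite_toSet.subset hJS
  rw [coe_subset] at hIJ hJS
  have hv₀J : v₀ ∈ J := hIJ hv₀
  have hd : (0 : ℝ) ≤ #I - 2 - z := by
    have : z ≤ #I - 2 := by omega
    rw [sub_nonneg]
    exact_mod_cast this
  set c : (Fin n → ℝ) → ℝ := fun v =>
    (if v ∈ I then μ v else 1) + if v = v₀ then (#I - 2 - z : ℝ) else 0
  have hc : ∀ v ∈ J, 0 < c v := by
    intro v _
    have h1 : 0 < if v ∈ I then μ v else 1 := by split_ifs with hvI; exacts [hμ v hvI, one_pos]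
    have h2 : 0 ≤ if v = v₀ then (#I - 2 - z : ℝ) else 0 := by split_ifs; exacts [hd, le_rfl]
    exact add_pos_of_pos_of_nonneg h1 h2
  have hsum : ∑ v ∈ J, c v = #J - 2 := by
    rw [sum_add_distrib, sum_ite_mem_of_subset hIJ, sum_ite_eq' J v₀, if_pos hv₀J, hz,
      ← cast_card, card_sdiff_of_subset hIJ, Nat.cast_sub (card_le_card hIJ)]
    ring
  have hlatc : ∑ v ∈ J, c v • v ∈ latticePts n := by
    have hv₀L : v₀ ∈ latticeSubgroup n := hSlat (hIS hv₀)
    have hq : ∑ v ∈ J, c v • v =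
        ∑ v ∈ I, μ v • v + ∑ v ∈ J \ I, v + (#I - 2 - z : ℤ) • v₀ := by
      simp only [c, add_smul, sum_add_distrib, ite_smul, one_smul, zero_smul,
        sum_ite_mem_of_subset hIJ, sum_ite_eq', if_pos hv₀J, ← Int.cast_smul_eq_zsmul ℝ]
      push_cast
      rfl
    rw [hq]
    exact (latticeSubgroup n).add_mem ((latticeSubgroup n).add_mem hlat
      ((latticeSubgroup n).sum_mem fun v hv => hSlat (hJS (sdiff_subset hv))))
      (zsmul_mem hv₀L _)
  exact sum_smul_notMem_latticePts_of_pos hk hJS hJ hJspan hc hsum hlatc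

theorem sum_le_one_of_sum_smul_mem_latticePts
    (hSlat : (S : Set (Fin n → ℝ)) ⊆ latticePts n) (hspan : affineSpan ℝ (S : Set (Fin n → ℝ)) = ⊤)
    (hk : ∀ x ∈ interior (((n - 1 : ℕ) : ℝ) • convexHull ℝ (S : Set (Fin n → ℝ))),
      x ∉ latticePts n)
    {t : Finset (Fin n → ℝ)} (hts : t ⊆ S) (ht : AffineIndependent ℝ ((↑) : t → Fin n → ℝ))
    {ν : (Fin n → ℝ) → ℝ} (hν : ∀ v ∈ t, ν v < 1) (hlat : ∑ v ∈ t, ν v • v ∈ latticePts n)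
    {z : ℤ} (hz : ∑ v ∈ t, ν v = z) :
    z ≤ 1 := by
  classical
  set I := t.filter (ν · ≠ 0)
  have hIt : I ⊆ t := filter_subset _ _
  have hνI : ∑ v ∈ I, ν v = z := by rw [sum_filter_ne_zero, hz]
  have hνvI : ∑ v ∈ I, ν v • v = ∑ v ∈ t, ν v • v :=
    sum_filter_of_ne fun v _ h hv => h (by rw [hv, zero_smul])
  have hIL : ∑ v ∈ I, v ∈ latticeSubgroup n :=
    (latticeSubgroup n).sum_mem fun v hv => hSlat (hts (hIt hv))
  have hcompl : ∑ v ∈ I, (1 - ν v) • v ∈ latticePts n := by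
    simpa only [sub_smul, one_smul, sum_sub_distrib, hνvI, mem_latticeSubgroup]
      using (latticeSubgroup n).sub_mem hIL hlat
  have := card_sub_one_le_of_sum_smul_mem_latticePts hSlat hspan hk (hIt.trans hts)
    (ht.mono (coe_subset.2 hIt)) (fun v hv => sub_pos.2 (hν v (hIt hv))) hcompl
    (z := #I - z) (by rw [sum_sub_distrib, hνI, ← cast_card]; push_cast; ring)
  omega

theorem sum_smul_mem_nsmul_convexHull_inter {E : Type*} [AddCommGroup E] [Module ℝ E]
    {t : Finset E} {s L : Set E} (hts : (t : Set E) ⊆ s) {ν : E → ℝ} (hν : ∀ v ∈ t, 0 ≤ ν v)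
    {h : ℕ} (hh : h ≤ 1) (hsum : ∑ v ∈ t, ν v = h) (hL : ∑ v ∈ t, ν v • v ∈ L) :
    ∑ v ∈ t, ν v • v ∈ h • (convexHull ℝ s ∩ L) := by
  interval_cases h
  · have hzero : ∀ v ∈ t, ν v = 0 := (sum_eq_zero_iff_of_nonneg hν).1 (by exact_mod_cast hsum)
    rw [sum_eq_zero fun v hv => by rw [hzero v hv, zero_smul], zero_nsmul]
    exact Set.zero_mem_zero
  · rw [one_nsmul]
    exact ⟨convexHull_mono hts (mem_convexHull'.2 ⟨ν, hν, by exact_mod_cast hsum, rfl⟩), hL⟩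

theorem mem_nsmul_of_mem_smul_convexHull
    (hSlat : (S : Set (Fin n → ℝ)) ⊆ latticePts n) (hspan : affineSpan ℝ (S : Set (Fin n → ℝ)) = ⊤)
    (hk : ∀ x ∈ interior (((n - 1 : ℕ) : ℝ) • convexHull ℝ (S : Set (Fin n → ℝ))),
      x ∉ latticePts n)
    {m : ℕ} {x : Fin n → ℝ} (hx : x ∈ (m : ℝ) • convexHull ℝ (S : Set (Fin n → ℝ)))
    (hxlat : x ∈ latticePts n) :
    x ∈ m • (convexHull ℝ (S : Set (Fin n → ℝ)) ∩ latticePts n) := by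
  obtain ⟨p, hp, rfl⟩ := Set.mem_smul_set.1 hx
  rw [convexHull_eq_union] at hp
  simp only [Set.mem_iUnion] at hp
  obtain ⟨t, hts, ht, hpt⟩ := hp
  obtain ⟨w, hw0, hw1, rfl⟩ := mem_convexHull'.1 hpt
  set k : (Fin n → ℝ) → ℕ := fun v => ⌊m * w v⌋₊
  set ν : (Fin n → ℝ) → ℝ := fun v => m * w v - k v
  have hν0 : ∀ v ∈ t, 0 ≤ ν v := fun v hv =>
    sub_nonneg.2 (Nat.floor_le (mul_nonneg m.cast_nonneg (hw0 v hv)))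
  have hν1 : ∀ v ∈ t, ν v < 1 := fun v _ => by
    have := Nat.lt_floor_add_one ((m : ℝ) * w v)
    simp only [ν, k]
    linarith
  have hsplit : (m : ℝ) • ∑ v ∈ t, w v • v = ∑ v ∈ t, k v • v + ∑ v ∈ t, ν v • v := by
    rw [smul_sum, ← sum_add_distrib]
    refine sum_congr rfl fun v _ => ?_
    rw [smul_smul, ← Nat.cast_smul_eq_nsmul ℝ, ← add_smul, add_sub_cancel]
  have hνsum : ∑ v ∈ t, ν v = ((m - ∑ v ∈ t, k v : ℤ) : ℝ) := by
    simp only [ν, sum_sub_distrib, ← mul_sum, hw1]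
    push_cast
    ring
  have hνlat : ∑ v ∈ t, ν v • v ∈ latticePts n := by
    have hkL : ∑ v ∈ t, k v • v ∈ latticeSubgroup n :=
      (latticeSubgroup n).sum_mem fun v hv => nsmul_mem (hSlat (hts hv)) _
    have := (latticeSubgroup n).sub_mem (hsplit ▸ hxlat) hkL
    rwa [add_sub_cancel_left] at this
  have hle := sum_le_one_of_sum_smul_mem_latticePts hSlat hspan hk hts ht hν1 hνlat hνsum
  have hge : 0 ≤ (m - ∑ v ∈ t, k v : ℤ) := by exact_mod_cast hνsum ▸ sum_nonneg hν0
  obtain ⟨h, hh, hm⟩ : ∃ h ≤ 1, m = ∑ v ∈ t, k v + h := ⟨m - ∑ v ∈ t, k v, by omega, by omega⟩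
  rw [hsplit, hm, add_nsmul, ← sum_nsmul_assoc]
  refine Set.add_mem_add (Set.finsetSum_mem_finsetSum _ _ _ fun v hv =>
    Set.nsmul_mem_nsmul ⟨subset_convexHull ℝ _ (hts hv), hSlat (hts hv)⟩)
    (sum_smul_mem_nsmul_convexHull_inter hts hν0 hh ?_ hνlat)
  rw [hνsum, hm]
  push_cast
  ring

theorem normal_of_no_interior_lattice_point_in_dilate_general
    (n : ℕ)
    (S : Finset (Fin n → ℝ))
    (hSlat : (S : Set (Fin n → ℝ)) ⊆ latticePts n)
    (P : Set (Fin n → ℝ)) (hP : P = convexHull ℝ (S : Set (Fin n → ℝ)))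
    (hPfull : (interior P).Nonempty)
    (hk : ∀ x ∈ interior ((((n - 1 : ℕ)) : ℝ) • P), x ∉ latticePts n) :
    ∀ m : ℕ, 1 ≤ m →
      ∀ x ∈ ((m : ℝ) • P) ∩ latticePts n,
        ∃ f : Fin m → (Fin n → ℝ),
          (∀ i, f i ∈ P ∩ latticePts n) ∧ x = ∑ i, f i := by
  subst hP
  intro m _ x ⟨hxP, hxlat⟩
  have hspan := interior_convexHull_nonempty_iff_affineSpan_eq_top.1 hPfull
  obtain ⟨f, hf, hsum⟩ :=
    Set.mem_nsmul_iff_sum.1 (mem_nsmul_of_mem_smul_convexHull hSlat hspan hk hxP hxlat)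
  exact ⟨f, hf, hsum.symm⟩

/-- Special case `k = n - 1`, `ℓ = 1` of Corollary 1.4: if `P ⊆ ℝ^n` (`n ≥ 2`) is a
full-dimensional lattice polytope such that `(n-1)P` contains no lattice point in its
interior, then `P` itself is normal. -/
theorem normal_of_no_interior_lattice_point_in_dilate
    (n : ℕ) (hn : 2 ≤ n)
    (S : Finset (Fin n → ℝ)) (hS : S.Nonempty)
    (hSlat : (S : Set (Fin n → ℝ)) ⊆ latticePts n)
    (P : Set (Fin n → ℝ)) (hP : P = convexHull ℝ (S : Set (Fin n → ℝ)))
    (hPfull : (interior P).Nonempty)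
    (hk : ∀ x ∈ interior ((((n - 1 : ℕ)) : ℝ) • P), x ∉ latticePts n) :
    ∀ m : ℕ, 1 ≤ m →
      ∀ x ∈ ((m : ℝ) • P) ∩ latticePts n,
        ∃ f : Fin m → (Fin n → ℝ),
          (∀ i, f i ∈ P ∩ latticePts n) ∧ x = ∑ i, f i :=
  normal_of_no_interior_lattice_point_in_dilate_general n S hSlat P hP hPfull hk
end
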